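/- arXiv:2202.03023 — 3 statements merged into one kernel-verified Lean document; each statement's English description precedes it below -/
import Mathlib

section
/- Let b be a real number with 0 < b, let n, f, m be natural numbers with m < 2^n. Then b^(m / 2^f) = ∏_{j=0}^{n-1} c_j, where c_j = b^(2^j / 2^f) if the j-th bit of m is 1 and c_j = 1 otherwise. Here all exponentiations with real exponents are real powers (rpow). -/
/-!
Writing `m = ∑_{j < n} m_j 2^j` in binary, the exponent `m / 2^f` splits into the sum of the
`2^j / 2^f` over the set bits `j`, and `b ^ ·` turns this sum into the product of the factors.
-/

open Finset

theorem Nat.filter_testBit_range_eq_toFinset_bitIndices {m n : ℕ} (hm : m < 2 ^ n) :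
    {j ∈ range n | m.testBit j} = m.bitIndices.toFinset := by
  ext j
  simp only [mem_filter, mem_range, List.mem_toFinset, Nat.mem_bitIndices, and_iff_right_iff_imp]
  intro hj
  exact (Nat.pow_lt_pow_iff_right (by norm_num)).1 ((Nat.ge_two_pow_of_testBit hj).trans_lt hm)

theorem Nat.sum_range_ite_testBit {m n : ℕ} (hm : m < 2 ^ n) :
    ∑ j ∈ range n, (if m.testBit j then 2 ^ j else 0) = m := by
  rw [← sum_filter, Nat.filter_testBit_range_eq_toFinset_bitIndices hm,
    sum_toFinset_bitIndices_two_pow]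

/-- Correctness of EXP for nonnegative fixed-point powers. -/
theorem exp_correct_nonneg (b : ℝ) (hb : 0 < b) (n f m : ℕ) (hm : m < 2 ^ n) :
    b ^ ((m : ℝ) / 2 ^ f) =
      ∏ j ∈ Finset.range n,
        (if Nat.testBit m j then b ^ ((2 ^ j : ℝ) / 2 ^ f) else 1) := by
  have hexp : (m : ℝ) / 2 ^ f =
      ∑ j ∈ range n, (if m.testBit j then (2 ^ j : ℝ) / 2 ^ f else 0) := by
    conv_lhs => rw [← Nat.sum_range_ite_testBit hm]
    push_cast [apply_ite (Nat.cast : ℕ → ℝ), sum_div, ite_div, zero_div]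
    rfl
  rw [hexp, Real.rpow_sum_of_pos hb]
  exact prod_congr rfl fun j _ ↦ by split_ifs <;> simp
end

section
/- Let K > 0 be a natural number and x₀, x₁, r₀, r₁ natural numbers all strictly less than K. Define y₀ = (x₀ + r₀) mod K, y₁ = (x₁ + r₁) mod K, the wrap bit w_Y = (K ≤ y₀ + y₁), the wrap bit w_R = (K ≤ r₀ + r₁), the comparison bit u = ((x₀ + x₁ + r₀ + r₁) mod K < (r₀ + r₁) mod K), and c = w_R XOR u. Then in the ring ZMod (2K) of integers modulo 2K: (y₀ + y₁ + (if w_Y then K else 0)) − (r₀ + r₁ + (if c then K else 0)) = (x₀ + x₁) mod K, where all natural numbers are cast into ZMod (2K). -/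
/-!
Put `s = (x₀ + x₁ + r₀ + r₁) % K`, `a = (x₀ + x₁) % K`, `r = (r₀ + r₁) % K`. Each bit is the
carry of a sum of two residues: `y₀ + y₁ = s + K·w_Y`, `r₀ + r₁ = r + K·w_R` and `a + r = s + K·u`,
the last because a sum of two residues wraps exactly when its residue drops below a summand.
Modulo `2K` we have `K·(w_R xor u) = K·w_R + K·u` and `2K·w = 0`, so the reconstruction is
`s − r − K·u = s − r + K·u = a`.
-/

theorem Nat.add_mod_lt_mod_right_iff {a b c : ℕ} (hc : 0 < c) :
    (a + b) % c < b % c ↔ c ≤ a % c + b % c := by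
  have hsplit := Nat.add_mod_add_ite a b c
  have ha : a % c < c := Nat.mod_lt a hc
  split_ifs at hsplit with h <;> simp only [h, iff_true, iff_false] <;> omega

section AddSelfEqZero

variable {M : Type*} [AddMonoid M] {k : M}

theorem ite_add_ite_self_of_add_self (hk : k + k = 0) (p : Prop) [Decidable p] :
    ((if p then k else 0) + if p then k else 0) = 0 := by
  split_ifs <;> simp [hk]

theorem ite_xor_of_add_self (hk : k + k = 0) (p q : Prop) [Decidable p] [Decidable q] :
    (if Xor p q then k else 0) = (if p then k else 0) + if q then k else 0 := by
  by_cases hp : p <;> by_cases hq : q <;> simp [hp, hq, hk]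

end AddSelfEqZero

theorem ZMod.natCast_add_self_two_mul (K : ℕ) : (K : ZMod (2 * K)) + K = 0 := by
  rw [← Nat.cast_add, ← two_mul, ZMod.natCast_self]

theorem moc_correct_general (K : ℕ) (hK : 0 < K) (x₀ x₁ r₀ r₁ y₀ y₁ : ℕ)
    (hr₀ : r₀ < K) (hr₁ : r₁ < K)
    (hy₀ : y₀ = (x₀ + r₀) % K) (hy₁ : y₁ = (x₁ + r₁) % K) :
    ((y₀ : ZMod (2 * K)) + (y₁ : ZMod (2 * K)) +
        (if K ≤ y₀ + y₁ then (K : ZMod (2 * K)) else 0)) -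
      ((r₀ : ZMod (2 * K)) + (r₁ : ZMod (2 * K)) +
        (if Xor (K ≤ r₀ + r₁)
            ((x₀ + x₁ + r₀ + r₁) % K < (r₀ + r₁) % K) then (K : ZMod (2 * K)) else 0))
    = (((x₀ + x₁) % K : ℕ) : ZMod (2 * K)) := by
  have hKK := ZMod.natCast_add_self_two_mul K
  have hy : (x₀ + x₁ + (r₀ + r₁)) % K + (if K ≤ y₀ + y₁ then K else 0) = y₀ + y₁ := by
    rw [hy₀, hy₁, add_add_add_comm]
    exact Nat.add_mod_add_ite _ _ _
  have hr : (r₀ + r₁) % K + (if K ≤ r₀ + r₁ then K else 0) = r₀ + r₁ := by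
    simpa only [Nat.mod_eq_of_lt hr₀, Nat.mod_eq_of_lt hr₁] using Nat.add_mod_add_ite r₀ r₁ K
  have hx := Nat.add_mod_add_ite (x₀ + x₁) (r₀ + r₁) K
  have hu : (x₀ + x₁ + r₀ + r₁) % K < (r₀ + r₁) % K ↔ K ≤ (x₀ + x₁) % K + (r₀ + r₁) % K := by
    rw [add_assoc (x₀ + x₁)]
    exact Nat.add_mod_lt_mod_right_iff hK
  simp only [hu, ite_xor_of_add_self hKK]
  have hy' := congrArg (Nat.cast : ℕ → ZMod (2 * K)) hy
  have hr' := congrArg (Nat.cast : ℕ → ZMod (2 * K)) hr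
  have hx' := congrArg (Nat.cast : ℕ → ZMod (2 * K)) hx
  push_cast [Nat.cast_ite] at hy' hr' hx'
  linear_combination hr' + hx' - hy' + ite_add_ite_self_of_add_self hKK (K ≤ y₀ + y₁)
    - ite_add_ite_self_of_add_self hKK (K ≤ r₀ + r₁)
    - ite_add_ite_self_of_add_self hKK (K ≤ (x₀ + x₁) % K + (r₀ + r₁) % K)

/-- Correctness of the modulus conversion protocol MOC: the reconstruction of
the output shares over ℤ_{2K} equals (x₀ + x₁) mod K. -/
theorem moc_correct (K : ℕ) (hK : 0 < K) (x₀ x₁ r₀ r₁ y₀ y₁ : ℕ)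
    (hx₀ : x₀ < K) (hx₁ : x₁ < K) (hr₀ : r₀ < K) (hr₁ : r₁ < K)
    (hy₀ : y₀ = (x₀ + r₀) % K) (hy₁ : y₁ = (x₁ + r₁) % K) :
    ((y₀ : ZMod (2 * K)) + (y₁ : ZMod (2 * K)) +
        (if K ≤ y₀ + y₁ then (K : ZMod (2 * K)) else 0)) -
      ((r₀ : ZMod (2 * K)) + (r₁ : ZMod (2 * K)) +
        (if Xor (K ≤ r₀ + r₁)
            ((x₀ + x₁ + r₀ + r₁) % K < (r₀ + r₁) % K) then (K : ZMod (2 * K)) else 0))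
    = (((x₀ + x₁) % K : ℕ) : ZMod (2 * K)) :=
  moc_correct_general K hK x₀ x₁ r₀ r₁ y₀ y₁ hr₀ hr₁ hy₀ hy₁
end

section
/- Let G and M be real q × q matrices with Mᵀ · M = 1, let α, σ, μ be real numbers with α ≠ 0, and let w be a vector in ℝ^q such that (M · (α G + σ I) · Mᵀ) · w = μ w. Then G · (Mᵀ w) = ((μ − σ)/α) · (Mᵀ w). That is, eigenpairs of the masked matrix G' = M(αG + σI)Mᵀ recover eigenpairs of G via the unmasking λ = (μ − σ)/α and v = Mᵀ w. -/
open Matrix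

namespace Matrix

variable {n R : Type*} [Fintype n] [DecidableEq n]

theorem mulVec_mulVec_eq_smul_of_conj_mulVec_eq_smul [CommSemiring R]
    {A M N : Matrix n n R} (hNM : N * M = 1) {μ : R} {w : n → R}
    (hw : (M * A * N) *ᵥ w = μ • w) : A *ᵥ (N *ᵥ w) = μ • (N *ᵥ w) := by
  calc A *ᵥ (N *ᵥ w) = N *ᵥ ((M * A * N) *ᵥ w) := by
        rw [mulVec_mulVec, mulVec_mulVec, ← Matrix.mul_assoc, ← Matrix.mul_assoc, hNM,
          Matrix.one_mul]
    _ = μ • (N *ᵥ w) := by rw [hw, mulVec_smul]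

theorem mulVec_eq_smul_of_affine_mulVec_eq_smul [Field R] {G : Matrix n n R} {α σ μ : R}
    (hα : α ≠ 0) {v : n → R} (hv : (α • G + σ • (1 : Matrix n n R)) *ᵥ v = μ • v) :
    G *ᵥ v = ((μ - σ) / α) • v := by
  have hscaled : α • (G *ᵥ v) = (μ - σ) • v := by
    rw [add_mulVec, smul_mulVec, smul_mulVec, one_mulVec] at hv
    rw [sub_smul, ← hv, add_sub_cancel_right]
  rw [div_eq_inv_mul, mul_smul, ← hscaled, smul_smul, inv_mul_cancel₀ hα, one_smul]

end Matrix

/-- Unmasking correctness of the eigenvalue decomposition step of INVSQRT. -/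
theorem invsqrt_unmask_eigen {q : ℕ} (G M : Matrix (Fin q) (Fin q) ℝ)
    (hM : Mᵀ * M = 1) (α σ μ : ℝ) (hα : α ≠ 0) (w : Fin q → ℝ)
    (hw : (M * (α • G + σ • (1 : Matrix (Fin q) (Fin q) ℝ)) * Mᵀ).mulVec w = μ • w) :
    G.mulVec (Mᵀ.mulVec w) = ((μ - σ) / α) • (Mᵀ.mulVec w) :=
  mulVec_eq_smul_of_affine_mulVec_eq_smul hα (mulVec_mulVec_eq_smul_of_conj_mulVec_eq_smul hM hw)
end
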